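/- arXiv:1901.04080 — 8 statements merged into one kernel-verified Lean document; each statement's English description precedes it below -/
import Mathlib

section
/- Fix integers k, m with 1 ≤ k ≤ m. For every integer n ≥ m, the diagonal sum T_n^{(k,m)} satisfies the generalized Fibonacci recurrence T_n^{(k,m)} = T_{n−k}^{(k,m)} + T_{n−m}^{(k,m)}. -/
/-- The sum of the entries of Pascal's triangle `(x, y) ↦ (x+y).choose x`
lying on the diagonal `k*x + m*y = n`. -/
def pascalDiagSum (k m n : ℕ) : ℕ :=
  ∑ x ∈ Finset.range (n + 1), ∑ y ∈ Finset.range (n + 1),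
    if k * x + m * y = n then (x + y).choose x else 0

open Finset

lemma pds_eq (k m n : ℕ) :
    pascalDiagSum k m n =
      ∑ p ∈ (range (n + 1) ×ˢ range (n + 1)).filter (fun p => k * p.1 + m * p.2 = n),
        (p.1 + p.2).choose p.1 := by
  rw [pascalDiagSum, sum_filter, sum_product]

lemma reindex1 (k m n : ℕ) (hk : 1 ≤ k) (hm : 1 ≤ m) (hkn : k ≤ n) :
    pascalDiagSum k m (n - k) =
      ∑ p ∈ (range (n + 1) ×ˢ range (n + 1)).filter
          (fun p => (k * p.1 + m * p.2 = n) ∧ 1 ≤ p.1),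
        (p.1 + p.2 - 1).choose (p.1 - 1) := by
  rw [pds_eq]
  refine Finset.sum_nbij' (fun p => (p.1 + 1, p.2)) (fun q => (q.1 - 1, q.2)) ?_ ?_ ?_ ?_ ?_
  · rintro ⟨x, y⟩ hp
    simp only [mem_filter, mem_product, mem_range] at hp ⊢
    obtain ⟨⟨hx, hy⟩, heq⟩ := hp
    have heq' : k * (x + 1) + m * y = n := by
      have h2 : k * (x + 1) = k * x + k := by ring
      omega
    have hb : 1 * (x + 1) ≤ k * (x + 1) := Nat.mul_le_mul_right _ hk
    refine ⟨⟨by omega, by omega⟩, heq', by omega⟩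
  · rintro ⟨x, y⟩ hq
    simp only [mem_filter, mem_product, mem_range] at hq ⊢
    obtain ⟨⟨hx, hy⟩, heq, hx1⟩ := hq
    obtain ⟨x', rfl⟩ : ∃ x', x = x' + 1 := ⟨x - 1, by omega⟩
    simp only [Nat.add_sub_cancel]
    have h2 : k * (x' + 1) = k * x' + k := by ring
    have hb1 : 1 * x' ≤ k * x' := Nat.mul_le_mul_right _ hk
    have hb2 : 1 * y ≤ m * y := Nat.mul_le_mul_right _ hm
    refine ⟨⟨by omega, by omega⟩, by omega⟩
  · rintro ⟨x, y⟩ _; simp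
  · rintro ⟨x, y⟩ hq
    simp only [mem_filter, mem_product, mem_range] at hq
    obtain ⟨_, _, hx1⟩ := hq
    simp [Nat.sub_add_cancel hx1]
  · rintro ⟨x, y⟩ _; simp

lemma reindex2 (k m n : ℕ) (hk : 1 ≤ k) (hm : 1 ≤ m) (hmn : m ≤ n) :
    pascalDiagSum k m (n - m) =
      ∑ p ∈ (range (n + 1) ×ˢ range (n + 1)).filter
          (fun p => (k * p.1 + m * p.2 = n) ∧ 1 ≤ p.2),
        (p.1 + p.2 - 1).choose p.1 := by
  rw [pds_eq]
  refine Finset.sum_nbij' (fun p => (p.1, p.2 + 1)) (fun q => (q.1, q.2 - 1)) ?_ ?_ ?_ ?_ ?_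
  · rintro ⟨x, y⟩ hp
    simp only [mem_filter, mem_product, mem_range] at hp ⊢
    obtain ⟨⟨hx, hy⟩, heq⟩ := hp
    have heq' : k * x + m * (y + 1) = n := by
      have h2 : m * (y + 1) = m * y + m := by ring
      omega
    have hb : 1 * (y + 1) ≤ m * (y + 1) := Nat.mul_le_mul_right _ hm
    refine ⟨⟨by omega, by omega⟩, heq', by omega⟩
  · rintro ⟨x, y⟩ hq
    simp only [mem_filter, mem_product, mem_range] at hq ⊢
    obtain ⟨⟨hx, hy⟩, heq, hy1⟩ := hq
    obtain ⟨y', rfl⟩ : ∃ y', y = y' + 1 := ⟨y - 1, by omega⟩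
    simp only [Nat.add_sub_cancel]
    have h2 : m * (y' + 1) = m * y' + m := by ring
    have hb1 : 1 * x ≤ k * x := Nat.mul_le_mul_right _ hk
    have hb2 : 1 * y' ≤ m * y' := Nat.mul_le_mul_right _ hm
    refine ⟨⟨by omega, by omega⟩, by omega⟩
  · rintro ⟨x, y⟩ _; simp
  · rintro ⟨x, y⟩ hq
    simp only [mem_filter, mem_product, mem_range] at hq
    obtain ⟨_, _, hy1⟩ := hq
    simp [Nat.sub_add_cancel hy1]
  · rintro ⟨x, y⟩ _; simp

lemma pascal_split (x y : ℕ) (h : ¬(x = 0 ∧ y = 0)) :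
    (x + y).choose x =
      (if 1 ≤ x then (x + y - 1).choose (x - 1) else 0) +
      (if 1 ≤ y then (x + y - 1).choose x else 0) := by
  rcases x with _ | x <;> rcases y with _ | y <;> simp_all
  · rw [show x + 1 + (y + 1) = (x + (y + 1)) + 1 by ring, Nat.choose_succ_succ]
    congr 2 <;> omega

theorem diag_sum_generalized_fibonacci_recurrence (k m : ℕ) (hk : 1 ≤ k) (hkm : k ≤ m)
    (n : ℕ) (hn : m ≤ n) :
    pascalDiagSum k m n = pascalDiagSum k m (n - k) + pascalDiagSum k m (n - m) := by
  have hm : 1 ≤ m := le_trans hk hkm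
  rw [pds_eq, reindex1 k m n hk hm (le_trans hkm hn), reindex2 k m n hk hm hn]
  rw [← Finset.filter_filter (fun p : ℕ × ℕ => k * p.1 + m * p.2 = n) (fun p => 1 ≤ p.1),
      ← Finset.filter_filter (fun p : ℕ × ℕ => k * p.1 + m * p.2 = n) (fun p => 1 ≤ p.2),
      Finset.sum_filter (fun p : ℕ × ℕ => 1 ≤ p.1)
        (fun p : ℕ × ℕ => (p.1 + p.2 - 1).choose (p.1 - 1)),
      Finset.sum_filter (fun p : ℕ × ℕ => 1 ≤ p.2)
        (fun p : ℕ × ℕ => (p.1 + p.2 - 1).choose p.1),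
      ← Finset.sum_add_distrib]
  refine Finset.sum_congr rfl ?_
  rintro ⟨x, y⟩ hp
  simp only [mem_filter, mem_product, mem_range] at hp
  refine pascal_split x y ?_
  rintro ⟨rfl, rfl⟩
  simp only [mul_zero, add_zero] at hp
  omega
end

section
/- Fix integers 1 ≤ k < m. For every integer n ≥ m, b_n = a_{n−m}; that is, the lifetime-k subpopulation sequence is the total population sequence time-shifted by m. -/
theorem short_lifetime_subpopulation_is_shifted_population (k m : ℕ) (hk : 1 ≤ k) (hkm : k < m)
    (a b : ℕ → ℕ)
    (ha0 : ∀ n < m, a n = 1)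
    (harec : ∀ n ≥ m, a n = a (n - k) + a (n - m))
    (hb0 : ∀ n < m, b n = 0)
    (hb1 : ∀ n, m ≤ n → n ≤ m + k - 1 → b n = 1)
    (hbrec : ∀ n ≥ m + k, b n = b (n - k) + b (n - m)) :
    ∀ n ≥ m, b n = a (n - m) := by
  intro n
  induction n using Nat.strong_induction_on with
  | _ n ih =>
    intro hn
    by_cases h1 : n < m + k
    · rw [hb1 n hn (by omega), ha0 (n - m) (by omega)]
    · push_neg at h1
      rw [hbrec n h1, ih (n - k) (by omega) (by omega)]
      by_cases h2 : n - m < m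
      · rw [hb0 (n - m) h2, ha0 (n - m) h2, ha0 (n - k - m) (by omega)]
      · push_neg at h2
        rw [ih (n - m) (by omega) h2, harec (n - m) h2]
        rw [show n - k - m = n - m - k from by omega]
end

section
/- Fix integers 1 ≤ k < m. For every integer n ≥ k, c_n = a_{n−k}; that is, the lifetime-m subpopulation sequence is the total population sequence time-shifted by k. -/
theorem long_lifetime_subpopulation_is_shifted_population (k m : ℕ) (hk : 1 ≤ k) (hkm : k < m)
    (a c : ℕ → ℕ)
    (ha0 : ∀ n < m, a n = 1)
    (harec : ∀ n ≥ m, a n = a (n - k) + a (n - m))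
    (hc0 : ∀ n < m + k, c n = 1)
    (hcrec : ∀ n ≥ m + k, c n = c (n - k) + c (n - m)) :
    ∀ n ≥ k, c n = a (n - k) := by
  intro n
  induction n using Nat.strong_induction_on with
  | _ n ih =>
    intro hn
    by_cases h : n < m + k
    · rw [hc0 n h, ha0]
      omega
    · push_neg at h
      rw [hcrec n h, ih (n - k) (by omega) (by omega), ih (n - m) (by omega) (by omega),
          harec (n - k) (by omega)]
      congr 2 <;> omega
end

section
/- Fix coprime integers 1 ≤ k < m. For every integer n ≥ m, the cumulative sum of diagonal sums satisfies Σ_{i=m}^{n} T_{i−m}^{(k,m)} = Σ_{j=0}^{⌊n/k⌋} C(⌊(n−jk)/m⌋ + j, j+1). -/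
open Finset in
lemma hockey_aux (x Y : ℕ) :
    ∑ y ∈ range (Y + 1), (x + y).choose x = (x + Y + 1).choose (x + 1) := by
  induction Y with
  | zero => simp
  | succ Y ih =>
      rw [Finset.sum_range_succ, ih,
        show x + (Y + 1) + 1 = (x + Y + 1) + 1 from by ring,
        Nat.choose_succ_succ, show x + (Y + 1) = x + Y + 1 from by ring]
      exact Nat.add_comm _ _

open Finset in
lemma pascal_extend (k m : ℕ) (hk : 1 ≤ k) (hm : 1 ≤ m) (t M : ℕ) (h : t ≤ M) :
    pascalDiagSum k m t = ∑ x ∈ range (M + 1), ∑ y ∈ range (M + 1),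
      if k * x + m * y = t then (x + y).choose x else 0 := by
  unfold pascalDiagSum
  rw [← Finset.sum_product', ← Finset.sum_product']
  apply Finset.sum_subset
  · intro p hp
    simp only [Finset.mem_product, Finset.mem_range] at hp ⊢
    omega
  · intro p hp hnp
    simp only [Finset.mem_product, Finset.mem_range] at hp hnp
    split
    · next heq =>
        exfalso
        have h1 : p.1 ≤ k * p.1 := Nat.le_mul_of_pos_left p.1 hk
        have h2 : p.2 ≤ m * p.2 := Nat.le_mul_of_pos_left p.2 hm
        omega
    · rfl

open Finset in
theorem cumulative_diag_sum_binomial (k m : ℕ) (hk : 1 ≤ k) (hkm : k < m)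
    (hcop : Nat.gcd k m = 1) (n : ℕ) (hn : m ≤ n) :
    ∑ i ∈ Finset.Icc m n, pascalDiagSum k m (i - m)
      = ∑ j ∈ Finset.range (n / k + 1), ((n - j * k) / m + j).choose (j + 1) := by
  have hm : 1 ≤ m := by omega
  set N := n - m with hN
  -- reindex LHS over `range (N+1)`
  have hIcc : Finset.Icc m n = Finset.Ico m (n + 1) := by
    rw [Finset.Ico_add_one_right_eq_Icc]
  rw [hIcc, Finset.sum_Ico_eq_sum_range]
  have hrange : n + 1 - m = N + 1 := by omega
  rw [hrange]
  have hstep1 : ∀ t ∈ range (N + 1), pascalDiagSum k m (m + t - m)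
      = ∑ p ∈ range (n + 1) ×ˢ range (n + 1),
          (if k * p.1 + m * p.2 = t then (p.1 + p.2).choose p.1 else 0) := by
    intro t ht
    simp only [Finset.mem_range] at ht
    rw [show m + t - m = t from by omega, pascal_extend k m hk hm t n (by omega),
      ← Finset.sum_product']
  rw [Finset.sum_congr rfl hstep1, Finset.sum_comm]
  -- collapse the sum over t
  have hstep2 : ∀ p ∈ range (n + 1) ×ˢ range (n + 1),
      (∑ t ∈ range (N + 1),
        if k * p.1 + m * p.2 = t then (p.1 + p.2).choose p.1 else 0)
      = (if k * p.1 + m * p.2 ∈ range (N + 1) then (p.1 + p.2).choose p.1 else 0) := by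
    intro p _
    exact Finset.sum_ite_eq (range (N + 1)) (k * p.1 + m * p.2) (fun _ => (p.1 + p.2).choose p.1)
  rw [Finset.sum_congr rfl hstep2, Finset.sum_product]
  -- inner sum over y
  have hstep3 : ∀ x ∈ range (n + 1),
      (∑ y ∈ range (n + 1),
        if k * x + m * y ∈ range (N + 1) then (x + y).choose x else 0)
      = (if k * x ≤ N then (x + (N - k * x) / m + 1).choose (x + 1) else 0) := by
    intro x _
    by_cases hx : k * x ≤ N
    · rw [if_pos hx]
      set Y := (N - k * x) / m with hY
      have hYle : Y ≤ n := le_trans (Nat.div_le_self _ _) (by omega)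
      have hsub : range (Y + 1) ⊆ range (n + 1) := by
        intro y hy; simp only [Finset.mem_range] at *; omega
      rw [← Finset.sum_subset hsub (fun y hy hny => by
        rw [if_neg]
        simp only [Finset.mem_range] at hy hny ⊢
        intro hle
        have : m * y ≤ N - k * x := by omega
        have : y ≤ Y := by
          rw [hY, Nat.le_div_iff_mul_le (by omega), Nat.mul_comm]; exact this
        omega)]
      rw [Finset.sum_congr rfl (fun y hy => by
        simp only [Finset.mem_range] at hy
        rw [if_pos]
        simp only [Finset.mem_range]
        have hym : m * y ≤ N - k * x := by
          rw [Nat.mul_comm]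
          exact (Nat.le_div_iff_mul_le (show 0 < m by omega)).1 (show y ≤ Y by omega)
        omega)]
      exact hockey_aux x Y
    · rw [if_neg hx]
      apply Finset.sum_eq_zero
      intro y _
      rw [if_neg]
      simp only [Finset.mem_range]
      omega
  rw [Finset.sum_congr rfl hstep3]
  -- now compare with the RHS
  have hsub2 : range (n / k + 1) ⊆ range (n + 1) := by
    intro j hj
    simp only [Finset.mem_range] at *
    have := Nat.div_le_self n k
    omega
  rw [← Finset.sum_subset hsub2 (fun x hx hnx => by
    simp only [Finset.mem_range] at hx hnx
    rw [if_neg]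
    have : n / k < x := by omega
    have : n < x * k := (Nat.div_lt_iff_lt_mul (by omega)).1 this
    have : ¬ (k * x ≤ N) := by rw [Nat.mul_comm]; omega
    omega)]
  apply Finset.sum_congr rfl
  intro j hj
  simp only [Finset.mem_range] at hj
  have hjk : j * k ≤ n := by
    have : j ≤ n / k := by omega
    calc j * k ≤ (n / k) * k := Nat.mul_le_mul_right k this
    _ ≤ n := Nat.div_mul_le_self n k
  by_cases hx : k * j ≤ N
  · rw [if_pos hx]
    have harith : n - j * k = (N - k * j) + m := by
      rw [Nat.mul_comm j k]
      omega
    rw [harith, Nat.add_div_right _ (show 0 < m by omega)]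
    congr 1
    omega
  · rw [if_neg hx]
    have hlt : n - j * k < m := by rw [Nat.mul_comm j k] at *; omega
    rw [Nat.div_eq_of_lt hlt]
    simp [Nat.choose_eq_zero_of_lt]
end

section
/- Fix coprime integers 1 ≤ k < m. For every integer n ≥ 0, a_n = 1 + Σ_{j=0}^{⌊n/k⌋} C(⌊(n−jk)/m⌋ + j, j+1); that is, the population sequence equals one plus the sum of the weights of the edges of the (k,m)-Pascal's triangle intersecting a vertical line, expressed as an explicit binomial sum. -/
private def pterm (k m n j : ℕ) : ℕ := ((n - j * k) / m + j).choose (j + 1)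

private lemma pterm_zero (k m n j : ℕ) (h : n - j * k < m) : pterm k m n j = 0 := by
  unfold pterm
  rw [Nat.div_eq_of_lt h, Nat.zero_add]
  exact Nat.choose_eq_zero_of_lt (by omega)

private lemma sum_pterm_ext (k m n N : ℕ) (hk : 1 ≤ k) (hm : 0 < m) (hN : n + 1 ≤ N) :
    ∑ j ∈ Finset.range N, pterm k m n j = ∑ j ∈ Finset.range (n + 1), pterm k m n j := by
  refine (Finset.sum_subset (Finset.range_subset_range.2 hN) ?_).symm
  intro j hj hj'
  simp only [Finset.mem_range, not_lt] at hj hj'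
  apply pterm_zero
  have hjk : j ≤ j * k := Nat.le_mul_of_pos_right j hk
  omega

private lemma pterm_step0 (k m n : ℕ) (hm : 0 < m) (hn : m ≤ n) :
    pterm k m n 0 = 1 + pterm k m (n - m) 0 := by
  unfold pterm
  simp only [Nat.zero_mul, Nat.sub_zero, Nat.add_zero, Nat.zero_add, Nat.choose_one_right]
  have e : n / m = (n - m) / m + 1 := by
    conv_lhs => rw [show n = (n - m) + m from by omega]
    rw [Nat.add_div_right _ hm]
  omega

private lemma pterm_step (k m n j : ℕ) (hm : 0 < m) (hn : m ≤ n) :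
    pterm k m n (j + 1) = pterm k m (n - k) j + pterm k m (n - m) (j + 1) := by
  have e1 : (n - k) - j * k = n - (j + 1) * k := by
    have : (j + 1) * k = j * k + k := by ring
    omega
  by_cases h : m + (j + 1) * k ≤ n
  · -- main case
    have e2 : (n - m) - (j + 1) * k = (n - (j + 1) * k) - m := by omega
    have hmt : m ≤ n - (j + 1) * k := by omega
    set t := n - (j + 1) * k with ht
    have e4 : t / m = (t - m) / m + 1 := by
      conv_lhs => rw [show t = (t - m) + m from by omega]
      rw [Nat.add_div_right _ hm]
    unfold pterm
    rw [e1, e2, ← ht, e4]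
    have : (t - m) / m + 1 + (j + 1) = ((t - m) / m + j + 1) + 1 := by ring
    rw [this, Nat.choose_succ_succ]
    congr 2 <;> ring
  · -- all three terms vanish
    push_neg at h
    rw [pterm_zero k m n (j + 1) (by omega),
      pterm_zero k m (n - k) j (by omega),
      pterm_zero k m (n - m) (j + 1) (by omega)]

private lemma main_lemma (k m : ℕ) (hk : 1 ≤ k) (hkm : k < m) (a : ℕ → ℕ)
    (ha0 : ∀ n < m, a n = 1)
    (harec : ∀ n ≥ m, a n = a (n - k) + a (n - m)) :
    ∀ n, a n = 1 + ∑ j ∈ Finset.range (n + 1), pterm k m n j := by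
  intro n
  induction n using Nat.strong_induction_on with
  | _ n ih =>
    have hm : 0 < m := by omega
    by_cases hn : n < m
    · rw [ha0 n hn]
      have hz : ∀ j ∈ Finset.range (n + 1), pterm k m n j = 0 := by
        intro j _
        exact pterm_zero k m n j (by omega)
      rw [Finset.sum_congr rfl hz]
      simp
    · push_neg at hn
      have hnk : n - k < n := by omega
      have hnm : n - m < n := by omega
      rw [harec n hn, ih (n - k) hnk, ih (n - m) hnm]
      have hT : ∑ j ∈ Finset.range (n + 1), pterm k m n j
          = 1 + ∑ j ∈ Finset.range (n - k + 1), pterm k m (n - k) j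
            + ∑ j ∈ Finset.range (n - m + 1), pterm k m (n - m) j := by
        rw [Finset.sum_range_succ']
        have hstep : ∀ j ∈ Finset.range n, pterm k m n (j + 1)
            = pterm k m (n - k) j + pterm k m (n - m) (j + 1) :=
          fun j _ => pterm_step k m n j hm hn
        rw [Finset.sum_congr rfl hstep, Finset.sum_add_distrib, pterm_step0 k m n hm hn]
        have e1 : ∑ j ∈ Finset.range n, pterm k m (n - k) j
            = ∑ j ∈ Finset.range (n - k + 1), pterm k m (n - k) j :=
          sum_pterm_ext k m (n - k) n hk hm (by omega)
        have e2 : ∑ j ∈ Finset.range n, pterm k m (n - m) (j + 1) + pterm k m (n - m) 0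
            = ∑ j ∈ Finset.range (n - m + 1), pterm k m (n - m) j := by
          rw [← Finset.sum_range_succ']
          exact sum_pterm_ext k m (n - m) (n + 1) hk hm (by omega)
        rw [e1]
        omega
      rw [hT]
      ring

theorem population_binomial_sum (k m : ℕ) (hk : 1 ≤ k) (hkm : k < m)
    (hcop : Nat.gcd k m = 1) (a : ℕ → ℕ)
    (ha0 : ∀ n < m, a n = 1)
    (harec : ∀ n ≥ m, a n = a (n - k) + a (n - m)) :
    ∀ n : ℕ, a n = 1 + ∑ j ∈ Finset.range (n / k + 1), ((n - j * k) / m + j).choose (j + 1) := by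
  intro n
  have hm : 0 < m := by omega
  rw [main_lemma k m hk hkm a ha0 harec n]
  congr 1
  have hsub : Finset.range (n / k + 1) ⊆ Finset.range (n + 1) :=
    Finset.range_subset_range.2 (by have := Nat.div_le_self n k; omega)
  simp only [pterm]
  refine (Finset.sum_subset hsub ?_).symm
  intro j hj hj'
  simp only [Finset.mem_range, not_lt] at hj hj'
  have hnj : n < j * k := (Nat.div_lt_iff_lt_mul hk).1 (by omega)
  rw [Nat.div_eq_of_lt (show n - j * k < m by omega), Nat.zero_add]
  exact Nat.choose_eq_zero_of_lt (by omega)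
end

section
/- Fix coprime integers 1 ≤ k < m. For every integer n ≥ 0, the sum of the entries of Pascal's triangle lying on the diagonal kx+my=n is given by the explicit binomial identity T_n^{(k,m)} = Σ_{j=0}^{⌊(n+m)/k⌋} C(⌊(n−jk)/m⌋ + j + 1, j+1) − Σ_{j=0}^{⌊(n+m−1)/k⌋} C(⌊(n−1−jk)/m⌋ + j + 1, j+1). -/
/-- If the numerator is negative, the binomial term vanishes. -/
lemma term_zero (m j : ℕ) (q : ℚ) (hm : 0 < m) (hq : q < 0) :
    ((⌊q / (m : ℚ)⌋ + j + 1).toNat.choose (j + 1) : ℤ) = 0 := by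
  have hfl : ⌊q / (m : ℚ)⌋ < 0 := by
    rw [Int.floor_lt]
    push_cast
    exact div_neg_of_neg_of_pos hq (by exact_mod_cast hm)
  have h2 : (⌊q / (m : ℚ)⌋ + (j : ℤ) + 1).toNat < j + 1 := by omega
  rw [Nat.choose_eq_zero_of_lt h2]
  simp

lemma term_pos (k m j N : ℕ) (h : k * j ≤ N) :
    ((⌊((N : ℚ) - j * k) / m⌋ + j + 1).toNat.choose (j + 1) : ℤ)
      = (((N - k * j) / m + j + 1).choose (j + 1) : ℤ) := by
  have h1 : ((N : ℚ) - j * k) = ((N - k * j : ℕ) : ℚ) := by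
    push_cast [Nat.cast_sub h]; ring
  rw [h1, Rat.floor_natCast_div_natCast, ← Int.natCast_div]
  have h3 : ((((N - k * j) / m : ℕ) : ℤ) + j + 1) = (((N - k * j) / m + j + 1 : ℕ) : ℤ) := by
    push_cast; ring
  rw [h3, Int.toNat_natCast]

/-- Hockey stick. -/
lemma hockey (x D : ℕ) :
    ∑ y ∈ Finset.range (D + 1), (x + y).choose x = (x + D + 1).choose (x + 1) := by
  induction D with
  | zero => simp
  | succ d ih =>
    rw [Finset.sum_range_succ, ih]
    have h : (x + d + 1 + 1).choose (x + 1) = (x + d + 1).choose x + (x + d + 1).choose (x + 1) :=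
      Nat.choose_succ_succ _ _
    have e2 : x + (d + 1) = x + d + 1 := rfl
    rw [e2]
    omega

lemma sum_ite_range (f : ℕ → ℤ) (D R : ℕ) (hDR : D ≤ R) :
    ∑ y ∈ Finset.range (R + 1), (if y ≤ D then f y else 0)
      = ∑ y ∈ Finset.range (D + 1), f y := by
  rw [show (∑ y ∈ Finset.range (D + 1), f y)
      = ∑ y ∈ Finset.range (D + 1), (if y ≤ D then f y else 0) from
    Finset.sum_congr rfl fun y hy => by
      rw [if_pos (by simpa [Nat.lt_succ_iff] using Finset.mem_range.mp hy)]]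
  exact (Finset.sum_subset (Finset.range_subset_range.mpr (by omega))
    (fun y _ hy => by
      rw [if_neg]
      simp only [Finset.mem_range, Nat.lt_succ_iff] at hy
      omega)).symm

lemma sum_le (k m N R : ℕ) (hk : 1 ≤ k) (hm : 1 ≤ m) (hR : N ≤ R) :
    ∑ j ∈ Finset.range ((N + m) / k + 1),
        ((⌊((N : ℚ) - j * k) / m⌋ + j + 1).toNat.choose (j + 1) : ℤ)
      = ∑ x ∈ Finset.range (R + 1), ∑ y ∈ Finset.range (R + 1),
          if k * x + m * y ≤ N then ((x + y).choose x : ℤ) else 0 := by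
  have key : ∀ (a : ℕ), N / k ≤ a →
      (∑ j ∈ Finset.range (a + 1),
        (if k * j ≤ N then (((N - k * j) / m + j + 1).choose (j + 1) : ℤ) else 0))
      = ∑ j ∈ Finset.range (N / k + 1),
        (if k * j ≤ N then (((N - k * j) / m + j + 1).choose (j + 1) : ℤ) else 0) := by
    intro a ha
    refine (Finset.sum_subset (Finset.range_subset_range.mpr (by omega)) ?_).symm
    intro j _ hj
    simp only [Finset.mem_range, Nat.lt_succ_iff] at hj
    rw [if_neg]
    intro hle
    exact hj ((Nat.le_div_iff_mul_le (show 0 < k by omega)).mpr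
      (by rw [Nat.mul_comm]; exact hle))
  -- LHS equals sum with ite
  have hL : ∑ j ∈ Finset.range ((N + m) / k + 1),
        ((⌊((N : ℚ) - j * k) / m⌋ + j + 1).toNat.choose (j + 1) : ℤ)
      = ∑ j ∈ Finset.range ((N + m) / k + 1),
        (if k * j ≤ N then (((N - k * j) / m + j + 1).choose (j + 1) : ℤ) else 0) := by
    refine Finset.sum_congr rfl fun j hj => ?_
    by_cases h : k * j ≤ N
    · rw [if_pos h, term_pos k m j N h]
    · rw [if_neg h]
      apply term_zero m j _ (by omega)
      have : (k : ℚ) * j > N := by exact_mod_cast Nat.lt_of_not_le h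
      nlinarith [this]
  -- RHS inner sums
  have hRin : ∀ x, x ∈ Finset.range (R + 1) →
      (∑ y ∈ Finset.range (R + 1), if k * x + m * y ≤ N then ((x + y).choose x : ℤ) else 0)
      = if k * x ≤ N then (((N - k * x) / m + x + 1).choose (x + 1) : ℤ) else 0 := by
    intro x _
    by_cases h : k * x ≤ N
    · rw [if_pos h]
      have hc : ∀ y, y ≤ (N - k * x) / m ↔ m * y ≤ N - k * x := fun y => by
        rw [Nat.le_div_iff_mul_le (show 0 < m by omega), Nat.mul_comm]
      have hcond : ∀ y, (k * x + m * y ≤ N) ↔ (y ≤ (N - k * x) / m) := by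
        intro y
        rw [hc y]
        omega
      rw [Finset.sum_congr rfl (fun y _ => by rw [show (if k * x + m * y ≤ N
            then ((x + y).choose x : ℤ) else 0)
          = (if y ≤ (N - k * x) / m then ((x + y).choose x : ℤ) else 0) from by
            simp [hcond y]])]
      rw [sum_ite_range (fun y => ((x + y).choose x : ℤ)) ((N - k * x) / m) R
        (le_trans (Nat.div_le_self _ _) (by omega))]
      rw [show (∑ y ∈ Finset.range ((N - k * x) / m + 1), ((x + y).choose x : ℤ))
          = ((∑ y ∈ Finset.range ((N - k * x) / m + 1), (x + y).choose x : ℕ) : ℤ) from by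
        push_cast; rfl]
      have e3 : x + (N - k * x) / m + 1 = (N - k * x) / m + x + 1 := by omega
      rw [hockey, e3]
    · rw [if_neg h]
      apply Finset.sum_eq_zero
      intro y _
      rw [if_neg (by omega)]
  rw [hL, Finset.sum_congr rfl hRin,
    key ((N + m) / k) (Nat.div_le_div_right (by omega)),
    key R (le_trans (Nat.div_le_self _ _) hR)]

theorem diag_sum_explicit_binomial_identity (k m : ℕ) (hk : 1 ≤ k) (hkm : k < m)
    (hcop : Nat.gcd k m = 1) (n : ℕ) :
    (pascalDiagSum k m n : ℤ)
      = ∑ j ∈ Finset.range ((n + m) / k + 1),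
          ((⌊((n : ℚ) - j * k) / m⌋ + j + 1).toNat.choose (j + 1) : ℤ)
        - ∑ j ∈ Finset.range ((n + m - 1) / k + 1),
          ((⌊((n : ℚ) - 1 - j * k) / m⌋ + j + 1).toNat.choose (j + 1) : ℤ) := by
  have hm : 1 ≤ m := by omega
  rcases Nat.eq_zero_or_pos n with hn | hn
  · subst hn
    have h2 : ∑ j ∈ Finset.range ((0 + m - 1) / k + 1),
        ((⌊(((0:ℕ) : ℚ) - 1 - j * k) / m⌋ + j + 1).toNat.choose (j + 1) : ℤ) = 0 := by
      apply Finset.sum_eq_zero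
      intro j _
      apply term_zero m j _ (by omega)
      have hj : (0:ℚ) ≤ (j : ℚ) * k := by positivity
      push_cast
      linarith
    rw [h2, sum_le k m 0 0 hk hm (le_refl 0)]
    simp [pascalDiagSum]
  · -- rewrite second sum with N = n - 1
    have e1 : n + m - 1 = (n - 1) + m := by omega
    have e2 : ∀ j : ℕ, ((n : ℚ) - 1 - j * k) = (((n - 1 : ℕ)) : ℚ) - j * k := by
      intro j
      rw [Nat.cast_sub hn]
      push_cast
      ring
    have h2 : ∑ j ∈ Finset.range ((n + m - 1) / k + 1),
        ((⌊((n : ℚ) - 1 - j * k) / m⌋ + j + 1).toNat.choose (j + 1) : ℤ)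
        = ∑ j ∈ Finset.range (((n - 1) + m) / k + 1),
          ((⌊(((n - 1 : ℕ) : ℚ) - j * k) / m⌋ + j + 1).toNat.choose (j + 1) : ℤ) := by
      rw [e1]
      exact Finset.sum_congr rfl fun j _ => by rw [e2 j]
    rw [h2, sum_le k m n n hk hm (le_refl n), sum_le k m (n - 1) n hk hm (by omega),
      ← Finset.sum_sub_distrib]
    rw [show (pascalDiagSum k m n : ℤ)
        = ∑ x ∈ Finset.range (n + 1), ∑ y ∈ Finset.range (n + 1),
            (if k * x + m * y = n then ((x + y).choose x : ℤ) else 0) from by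
      rw [pascalDiagSum]
      push_cast [apply_ite (Nat.cast : ℕ → ℤ)]
      rfl]
    refine Finset.sum_congr rfl fun x _ => ?_
    rw [← Finset.sum_sub_distrib]
    refine Finset.sum_congr rfl fun y _ => ?_
    by_cases h : k * x + m * y = n
    · rw [if_pos h, if_pos (show k * x + m * y ≤ n by omega),
        if_neg (show ¬ k * x + m * y ≤ n - 1 by omega)]
      ring
    · rw [if_neg h]
      by_cases h' : k * x + m * y ≤ n
      · rw [if_pos h', if_pos (show k * x + m * y ≤ n - 1 by omega)]
        ring
      · rw [if_neg h', if_neg (show ¬ k * x + m * y ≤ n - 1 by omega)]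
        ring
end

section
/- Fix coprime integers 1 ≤ k < m, and let r₀ ∈ (0,1) be the unique positive root of 1 − x^k − x^m = 0. Then the rescaled population sequence converges: lim_{n→∞} a_n · r₀^n = (1 − r₀^k) / ((1 − r₀)(m·r₀^m + k·r₀^k)). In particular, a_n ∼ (1 − r₀^k)/((1 − r₀)(m r₀^m + k r₀^k)) · r₀^{−n} as n → ∞. -/
/-!
Writing `b n = a n * r₀ ^ n`, `p = r₀ ^ k` and `q = r₀ ^ m`, the recurrence becomes
`b (n + m) = p * b (n + m - k) + q * b n` with `p + q = 1`: every new term is a convex combination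
of two earlier ones. Hence the minimum of `b` over a window of `m` consecutive indices increases and
the maximum decreases. Since `gcd(k, m) = 1`, every large gap is a combination `x * k + y * m`, so
a fixed positive fraction of the current window maximum reaches every entry of the window
`k * m + 2 * m` steps later; in the limit this forces the window minimum and maximum to agree, and
`b` converges. The limit is found from the conserved quantity
`p * (b (n + m - k) + ⋯ + b (n + m - 1)) + q * (b n + ⋯ + b (n + m - 1))`,
which tends to `(p * k + q * m) * L` and equals its value at `n = 0`, a geometric sum.
-/

open Filter Finset Topology

lemma sum_range_succ_add {M : Type*} [AddCommGroup M] (f : ℕ → M) (n l : ℕ) :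
    ∑ i ∈ range l, f (n + 1 + i) = ∑ i ∈ range l, f (n + i) + f (n + l) - f n := by
  have h := (sum_range_succ (fun i => f (n + i)) l).symm.trans (sum_range_succ' _ l)
  simp only [add_zero, ← add_assoc, add_right_comm n _ 1] at h
  rw [h, add_sub_cancel_right]

def LagRecurrence (p q : ℝ) (k m : ℕ) (b : ℕ → ℝ) : Prop :=
  ∀ n, b (n + m) = p * b (n + (m - k)) + q * b n

noncomputable def windowMin (b : ℕ → ℝ) (m : ℕ) [NeZero m] (n : ℕ) : ℝ :=
  (range m).inf' (nonempty_range_iff.2 (NeZero.ne m)) fun i => b (n + i)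

noncomputable def windowMax (b : ℕ → ℝ) (m : ℕ) [NeZero m] (n : ℕ) : ℝ :=
  (range m).sup' (nonempty_range_iff.2 (NeZero.ne m)) fun i => b (n + i)

section Window

variable {b : ℕ → ℝ} {m : ℕ} [NeZero m]

lemma windowMin_le (n : ℕ) {i : ℕ} (hi : i < m) : windowMin b m n ≤ b (n + i) :=
  inf'_le _ (mem_range.2 hi)

lemma le_windowMax (n : ℕ) {i : ℕ} (hi : i < m) : b (n + i) ≤ windowMax b m n :=
  le_sup' (fun i => b (n + i)) (mem_range.2 hi)

lemma windowMin_le_windowMax (n : ℕ) : windowMin b m n ≤ windowMax b m n :=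
  (windowMin_le n (NeZero.pos m)).trans (le_windowMax n (NeZero.pos m))

lemma exists_apply_eq_windowMax (n : ℕ) : ∃ i < m, b (n + i) = windowMax b m n := by
  obtain ⟨i, hi, h⟩ :=
    exists_mem_eq_sup' (nonempty_range_iff.2 (NeZero.ne m)) fun i => b (n + i)
  exact ⟨i, mem_range.1 hi, h.symm⟩

end Window

namespace LagRecurrence

variable {p q : ℝ} {k m : ℕ} {b : ℕ → ℝ}

lemma comp_add (h : LagRecurrence p q k m b) (n : ℕ) :
    LagRecurrence p q k m fun s => b (n + s) := fun s => by
  simpa only [add_assoc] using h (n + s)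

lemma sub_const (h : LagRecurrence p q k m b) (hpq : p + q = 1) (c : ℝ) :
    LagRecurrence p q k m fun s => b s - c := fun n => by
  dsimp only
  linear_combination h n + c * hpq

lemma const_sub (h : LagRecurrence p q k m b) (hpq : p + q = 1) (c : ℝ) :
    LagRecurrence p q k m fun s => c - b s := fun n => by
  dsimp only
  linear_combination -h n - c * hpq

lemma rescale (h : LagRecurrence p q k m b) (hkm : k ≤ m) (r : ℝ) :
    LagRecurrence (p * r ^ k) (q * r ^ m) k m fun n => b n * r ^ n := fun n => by
  have hr : r ^ (n + m) = r ^ (n + (m - k)) * r ^ k := by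
    rw [← pow_add]
    congr 1
    omega
  dsimp only
  rw [h n]
  linear_combination (p * b (n + (m - k))) * hr + q * b n * pow_add r n m

lemma nonneg (h : LagRecurrence p q k m b) (hp : 0 ≤ p) (hq : 0 ≤ q) (hk : 0 < k)
    (hkm : k ≤ m) (hb : ∀ i < m, 0 ≤ b i) (s : ℕ) : 0 ≤ b s := by
  induction s using Nat.strong_induction_on with
  | _ s ih =>
    rcases lt_or_ge s m with hs | hs
    · exact hb s hs
    · obtain ⟨n, rfl⟩ := Nat.exists_eq_add_of_le' hs
      rw [h n]
      exact add_nonneg (mul_nonneg hp (ih _ (by omega))) (mul_nonneg hq (ih _ (by omega)))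

section Nonneg

variable (h : LagRecurrence p q k m b) (hb : ∀ s, 0 ≤ b s)
include h hb

lemma p_pow_mul_le (hp : 0 ≤ p) (hq : 0 ≤ q) (hkm : k ≤ m) {t : ℕ} (ht : m ≤ t + k)
    (i : ℕ) : p ^ i * b t ≤ b (t + i * k) := by
  induction i generalizing t with
  | zero => simp
  | succ i ih =>
    have hstep : p * b t ≤ b (t + k) := by
      have e := h (t + k - m)
      rw [show t + k - m + m = t + k by omega, show t + k - m + (m - k) = t by omega] at e
      rw [e]
      linarith [mul_nonneg hq (hb (t + k - m))]
    calc p ^ (i + 1) * b t = p ^ i * (p * b t) := by ring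
      _ ≤ p ^ i * b (t + k) := mul_le_mul_of_nonneg_left hstep (pow_nonneg hp i)
      _ ≤ b (t + k + i * k) := ih (by omega)
      _ = b (t + (i + 1) * k) := by ring_nf

lemma q_pow_mul_le (hp : 0 ≤ p) (hq : 0 ≤ q) (t j : ℕ) : q ^ j * b t ≤ b (t + j * m) := by
  induction j generalizing t with
  | zero => simp
  | succ j ih =>
    have hstep : q * b t ≤ b (t + m) := by
      rw [h t]
      linarith [mul_nonneg hp (hb (t + (m - k)))]
    calc q ^ (j + 1) * b t = q ^ j * (q * b t) := by ring
      _ ≤ q ^ j * b (t + m) := mul_le_mul_of_nonneg_left hstep (pow_nonneg hq j)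
      _ ≤ b (t + m + j * m) := ih _
      _ = b (t + (j + 1) * m) := by ring_nf

lemma pow_mul_pow_mul_le (hp : 0 ≤ p) (hq : 0 ≤ q) (hkm : k ≤ m) {t : ℕ} (ht : m ≤ t + k)
    (i j : ℕ) : p ^ i * q ^ j * b t ≤ b (t + (i * k + j * m)) :=
  calc p ^ i * q ^ j * b t = p ^ i * (q ^ j * b t) := by ring
    _ ≤ p ^ i * b (t + j * m) :=
        mul_le_mul_of_nonneg_left (h.q_pow_mul_le hb hp hq t j) (pow_nonneg hp i)
    _ ≤ b (t + j * m + i * k) := h.p_pow_mul_le hb hp hq hkm (by omega) i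
    _ = b (t + (i * k + j * m)) := by ring_nf

end Nonneg

section Window

variable [NeZero m] (h : LagRecurrence p q k m b) (hp : 0 ≤ p) (hq : 0 ≤ q) (hpq : p + q = 1)
  (hk : 0 < k) (hkm : k ≤ m)
include h hp hq hpq hk hkm

lemma windowMin_le_apply (n s : ℕ) : windowMin b m n ≤ b (n + s) :=
  sub_nonneg.1 <| ((h.comp_add n).sub_const hpq _).nonneg hp hq hk hkm
    (fun _ hi => sub_nonneg.2 (windowMin_le n hi)) s

lemma apply_le_windowMax (n s : ℕ) : b (n + s) ≤ windowMax b m n :=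
  sub_nonneg.1 <| ((h.comp_add n).const_sub hpq _).nonneg hp hq hk hkm
    (fun _ hi => sub_nonneg.2 (le_windowMax n hi)) s

lemma windowMin_monotone : Monotone (windowMin b m) :=
  monotone_nat_of_le_succ fun n => le_inf' _ _ fun i _ => by
    simpa only [add_right_comm n 1 i, add_assoc] using
      h.windowMin_le_apply hp hq hpq hk hkm n (i + 1)

lemma windowMax_antitone : Antitone (windowMax b m) :=
  antitone_nat_of_succ_le fun n => sup'_le _ _ fun i _ => by
    simpa only [add_right_comm n 1 i, add_assoc] using
      h.apply_le_windowMax hp hq hpq hk hkm n (i + 1)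

lemma windowMin_add_mul_le (hcop : k.Coprime m) (n : ℕ) :
    windowMin b m n + (p * q) ^ (k * m + 2 * m) * (windowMax b m (n + m) - windowMin b m n) ≤
      windowMin b m (n + (k * m + 2 * m)) := by
  set N := k * m + 2 * m
  set c : ℕ → ℝ := fun s => b (n + s) - windowMin b m n
  have hc : LagRecurrence p q k m c := (h.comp_add n).sub_const hpq _
  have hc0 : ∀ s, 0 ≤ c s := fun s => sub_nonneg.2 (h.windowMin_le_apply hp hq hpq hk hkm n s)
  obtain ⟨t, ht, hmax⟩ := exists_apply_eq_windowMax (b := b) (m := m) (n + m)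
  refine le_inf' _ _ fun i hi => ?_
  have hi : i < m := mem_range.1 hi
  have hgap : (k - 1) * (m - 1) ≤ N + i - (m + t) := by
    have := Nat.mul_le_mul (Nat.sub_le k 1) (Nat.sub_le m 1)
    omega
  -- Two-coin problem: the gap from the maximiser `m + t` to the entry `N + i` is `x * k + y * m`,
  -- and along such a path the excess over `windowMin b m n` shrinks at most by `p ^ x * q ^ y`.
  obtain ⟨x, y, hxy⟩ := Nat.exists_add_mul_eq_of_gcd_dvd_of_mul_pred_le k m _
    (by simp [Nat.Coprime.gcd_eq_one hcop]) hgap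
  have hx : x ≤ N := by
    have := Nat.le_mul_of_pos_right x hk
    omega
  have hy : y ≤ N := by
    have := Nat.le_mul_of_pos_right y (hk.trans_le hkm)
    omega
  have hweight : (p * q) ^ N ≤ p ^ x * q ^ y := by
    rw [mul_pow]
    exact mul_le_mul (pow_le_pow_of_le_one hp (by linarith) hx)
      (pow_le_pow_of_le_one hq (by linarith) hy) (by positivity) (by positivity)
  have hreach := hc.pow_mul_pow_mul_le hc0 hp hq hkm (t := m + t) (by omega) x y
  rw [hxy, show m + t + (N + i - (m + t)) = N + i by omega] at hreach
  have := mul_le_mul_of_nonneg_right hweight (hc0 (m + t))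
  simp only [c, ← add_assoc, hmax] at this hreach
  linarith

end Window

theorem exists_tendsto (h : LagRecurrence p q k m b) (hp : 0 < p) (hq : 0 < q) (hpq : p + q = 1)
    (hk : 0 < k) (hkm : k ≤ m) (hcop : k.Coprime m) : ∃ L, Tendsto b atTop (𝓝 L) := by
  have : NeZero m := ⟨by omega⟩
  have hmono := h.windowMin_monotone hp.le hq.le hpq hk hkm
  have hanti := h.windowMax_antitone hp.le hq.le hpq hk hkm
  have hL := tendsto_atTop_ciSup hmono ⟨windowMax b m 0, Set.forall_mem_range.2 fun n =>
    (windowMin_le_windowMax n).trans (hanti n.zero_le)⟩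
  have hU := tendsto_atTop_ciInf hanti ⟨windowMin b m 0, Set.forall_mem_range.2 fun n =>
    (hmono n.zero_le).trans (windowMin_le_windowMax n)⟩
  set L := ⨆ n, windowMin b m n
  set U := ⨅ n, windowMax b m n
  have hLU : L ≤ U := le_of_tendsto_of_tendsto' hL hU windowMin_le_windowMax
  have hUL : U ≤ L := by
    set δ := (p * q) ^ (k * m + 2 * m)
    have hmix : L + δ * (U - L) ≤ L :=
      le_of_tendsto_of_tendsto'
        (hL.add (((hU.comp (tendsto_add_atTop_nat m)).sub hL).const_mul δ))
        (hL.comp (tendsto_add_atTop_nat _))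
        (h.windowMin_add_mul_le hp.le hq.le hpq hk hkm hcop)
    have hδ : 0 < δ := by positivity
    nlinarith
  refine ⟨L, tendsto_of_tendsto_of_tendsto_of_le_of_le hL (hUL.antisymm hLU ▸ hU)
    (fun n => ?_) (fun n => ?_)⟩
  · simpa using windowMin_le (b := b) n (NeZero.pos m)
  · simpa using le_windowMax (b := b) n (NeZero.pos m)

end LagRecurrence

def lagMass (p q : ℝ) (k m : ℕ) (b : ℕ → ℝ) (n : ℕ) : ℝ :=
  p * ∑ i ∈ range k, b (n + (m - k) + i) + q * ∑ i ∈ range m, b (n + i)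

section LagMass

variable {p q : ℝ} {k m : ℕ} {b : ℕ → ℝ}

lemma tendsto_lagMass {L : ℝ} (hb : Tendsto b atTop (𝓝 L)) :
    Tendsto (lagMass p q k m b) atTop (𝓝 ((p * k + q * m) * L)) := by
  have hsum (c l : ℕ) :
      Tendsto (fun n => ∑ i ∈ range l, b (n + c + i)) atTop (𝓝 (l * L)) := by
    have := tendsto_finsetSum (range l) fun i _ =>
      hb.comp (tendsto_add_atTop_nat (c + i))
    simpa [Function.comp_def, add_assoc] using this
  have := ((hsum (m - k) k).const_mul p).add ((hsum 0 m).const_mul q)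
  simp only [add_zero] at this
  rw [show (p * k + q * m) * L = p * (k * L) + q * (m * L) by ring]
  exact this

lemma lagMass_zero_congr {b' : ℕ → ℝ} (hkm : k ≤ m)
    (hbb' : ∀ i < m, b i = b' i) : lagMass p q k m b 0 = lagMass p q k m b' 0 := by
  unfold lagMass
  congr 2 <;> refine sum_congr rfl fun i hi => hbb' _ ?_ <;> simp at hi <;> omega

lemma one_sub_mul_lagMass_pow (hkm : k ≤ m) (r : ℝ) :
    (1 - r) * lagMass (r ^ k) (r ^ m) k m (r ^ ·) 0 = r ^ m * (2 - r ^ k - r ^ m) := by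
  have hshift : ∑ i ∈ range k, r ^ (m - k + i) = r ^ (m - k) * ∑ i ∈ range k, r ^ i := by
    simp only [pow_add, mul_sum]
  have hpow : r ^ k * r ^ (m - k) = r ^ m := by rw [← pow_add, Nat.add_sub_cancel' hkm]
  simp only [lagMass, zero_add]
  rw [hshift]
  linear_combination (-(r ^ k * r ^ (m - k))) * mul_geom_sum r k - r ^ m * mul_geom_sum r m
    + (1 - r ^ k) * hpow

namespace LagRecurrence

lemma lagMass_succ (h : LagRecurrence p q k m b) (hpq : p + q = 1) (hkm : k ≤ m) (n : ℕ) :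
    lagMass p q k m b (n + 1) = lagMass p q k m b n := by
  unfold lagMass
  rw [add_right_comm n 1, sum_range_succ_add, sum_range_succ_add,
    show n + (m - k) + k = n + m by omega]
  linear_combination b (n + m) * hpq + h n

lemma lagMass_eq (h : LagRecurrence p q k m b) (hpq : p + q = 1) (hkm : k ≤ m) (n : ℕ) :
    lagMass p q k m b n = lagMass p q k m b 0 := by
  induction n with
  | zero => rfl
  | succ n ih => rw [h.lagMass_succ hpq hkm, ih]

lemma mul_limit_eq (h : LagRecurrence p q k m b) (hpq : p + q = 1) (hkm : k ≤ m) {L : ℝ}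
    (hb : Tendsto b atTop (𝓝 L)) : (p * k + q * m) * L = lagMass p q k m b 0 :=
  tendsto_nhds_unique (tendsto_lagMass hb) <| by
    rw [funext (h.lagMass_eq hpq hkm)]
    exact tendsto_const_nhds

end LagRecurrence

end LagMass

theorem population_asymptotics (k m : ℕ) (hk : 1 ≤ k) (hkm : k < m)
    (hcop : Nat.gcd k m = 1) (a : ℕ → ℝ)
    (ha0 : ∀ n < m, a n = 1)
    (harec : ∀ n ≥ m, a n = a (n - k) + a (n - m))
    (r₀ : ℝ) (hr0 : 0 < r₀) (hr1 : r₀ < 1) (hroot : r₀ ^ k + r₀ ^ m = 1) :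
    Tendsto (fun n : ℕ => a n * r₀ ^ n) atTop
      (nhds ((1 - r₀ ^ k) / ((1 - r₀) * (m * r₀ ^ m + k * r₀ ^ k)))) := by
  have ha : LagRecurrence 1 1 k m a := fun n => by
    simpa [show n + m - k = n + (m - k) by omega] using harec (n + m) (by omega)
  have hb := ha.rescale hkm.le r₀
  simp only [one_mul] at hb
  obtain ⟨L, hL⟩ := hb.exists_tendsto (by positivity) (by positivity) hroot hk hkm.le hcop
  have hmass := hb.mul_limit_eq hroot hkm.le hL
  rw [lagMass_zero_congr (b' := (r₀ ^ ·)) hkm.le fun i hi => by simp [ha0 i hi]] at hmass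
  have hgeom := one_sub_mul_lagMass_pow hkm.le r₀
  convert hL using 2
  rw [div_eq_iff (by positivity)]
  linear_combination (-(1 - r₀)) * hmass - hgeom + (r₀ ^ m - 1) * hroot
end

section
/- Fix coprime integers 1 ≤ k < m, and let r₀ ∈ (0,1) be the unique positive root of 1 − x^k − x^m = 0. Then the fraction of the population with the longer lifetime converges: lim_{n→∞} c_n / a_n = r₀^k. -/
open Filter Finset

lemma frob_rep (k m : ℕ) (hk : 1 ≤ k) (hm : 1 < m) (hcop : Nat.gcd k m = 1)
    (s : ℕ) (hs : k * m ≤ s) : ∃ i j : ℕ, i * k + j * m = s := by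
  rcases eq_or_lt_of_le hk with h1 | h1
  · exact ⟨s, 0, by simp [← h1]⟩
  · have hfr := frobeniusNumber_pair hcop h1 hm
    have hmem : s ∈ AddSubmonoid.closure ({k, m} : Set ℕ) := by
      by_contra hns
      have := hfr.2 hns
      have ht : 0 < k * m := by positivity
      omega
    rw [AddSubmonoid.mem_closure_pair] at hmem
    obtain ⟨i, j, hij⟩ := hmem
    exact ⟨i, j, by simpa [smul_eq_mul] using hij⟩


lemma converges_aux (k m : ℕ) (hk : 1 ≤ k) (hkm : k < m) (hcop : Nat.gcd k m = 1)
    (α β : ℝ) (hα : 0 < α) (hβ : 0 < β) (hαβ : α + β = 1)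
    (b : ℕ → ℝ) (hrec : ∀ n ≥ m, b n = α * b (n - k) + β * b (n - m)) :
    ∃ L, (∃ n₀ < m, b n₀ ≤ L) ∧ Tendsto b atTop (nhds L) := by
  have hm0 : 0 < m := by omega
  have hα1 : α < 1 := by linarith
  have hβ1 : β < 1 := by linarith
  have hne : ∀ p : ℕ, (Finset.Ico p (p + m)).Nonempty := fun p =>
    ⟨p, by simp [hm0]⟩
  set mw : ℕ → ℝ := fun p => (Finset.Ico p (p + m)).inf' (hne p) b with hmw
  set sw : ℕ → ℝ := fun p => (Finset.Ico p (p + m)).sup' (hne p) b with hsw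
  -- H1 : window bounds propagate forward
  have H1 : ∀ p n, p ≤ n → mw p ≤ b n ∧ b n ≤ sw p := by
    intro p n
    induction n using Nat.strong_induction_on with
    | _ n ih =>
      intro hpn
      by_cases hcase : n < p + m
      · have hmem : n ∈ Finset.Ico p (p + m) := by simp [hpn, hcase]
        exact ⟨Finset.inf'_le b hmem, Finset.le_sup' b hmem⟩
      · push_neg at hcase
        have hnm : m ≤ n := by omega
        have h1 := ih (n - k) (by omega) (by omega)
        have h2 := ih (n - m) (by omega) (by omega)
        rw [hrec n hnm]
        have e1 : α * mw p + β * mw p = mw p := by rw [← add_mul, hαβ, one_mul]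
        have e2 : α * sw p + β * sw p = sw p := by rw [← add_mul, hαβ, one_mul]
        constructor
        · linarith [mul_le_mul_of_nonneg_left h1.1 hα.le, mul_le_mul_of_nonneg_left h2.1 hβ.le, e1]
        · linarith [mul_le_mul_of_nonneg_left h1.2 hα.le, mul_le_mul_of_nonneg_left h2.2 hβ.le, e2]
  -- H2 : monotonicity of windows
  have H2mw : ∀ p q, p ≤ q → mw p ≤ mw q := by
    intro p q hpq
    apply Finset.le_inf'
    intro x hx
    simp only [Finset.mem_Ico] at hx
    exact (H1 p x (le_trans hpq hx.1)).1
  have H2sw : ∀ p q, p ≤ q → sw q ≤ sw p := by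
    intro p q hpq
    apply Finset.sup'_le
    intro x hx
    simp only [Finset.mem_Ico] at hx
    exact (H1 p x (le_trans hpq hx.1)).2
  have H3 : ∀ p, mw p ≤ sw p := fun p => le_trans (H1 p p le_rfl).1 (H1 p p le_rfl).2
  -- H4 : propagation of excess over mw p
  have H4 : ∀ p q, p + m ≤ q → ∀ i j : ℕ,
      mw p + α ^ i * β ^ j * (b q - mw p) ≤ b (q + i * k + j * m) := by
    intro p q hq
    have hbq : mw p ≤ b q := (H1 p q (by omega)).1
    have step_k : ∀ t, q ≤ t → ∀ x, mw p ≤ x → x ≤ b t →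
        mw p + α * (x - mw p) ≤ b (t + k) := by
      intro t ht x hx1 hx2
      rw [hrec (t + k) (by omega), Nat.add_sub_cancel]
      have h2 : mw p ≤ b (t + k - m) := (H1 p (t + k - m) (by omega)).1
      have e1 : α * mw p + β * mw p = mw p := by rw [← add_mul, hαβ, one_mul]
      linarith [mul_le_mul_of_nonneg_left hx2 hα.le, mul_le_mul_of_nonneg_left h2 hβ.le]
    have step_m : ∀ t, q ≤ t → ∀ x, mw p ≤ x → x ≤ b t →
        mw p + β * (x - mw p) ≤ b (t + m) := by
      intro t ht x hx1 hx2
      rw [hrec (t + m) (by omega), Nat.add_sub_cancel]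
      have h2 : mw p ≤ b (t + m - k) := (H1 p (t + m - k) (by omega)).1
      have e1 : α * mw p + β * mw p = mw p := by rw [← add_mul, hαβ, one_mul]
      linarith [mul_le_mul_of_nonneg_left hx2 hβ.le, mul_le_mul_of_nonneg_left h2 hα.le]
    have Pi0 : ∀ i : ℕ, mw p + α ^ i * (b q - mw p) ≤ b (q + i * k) := by
      intro i
      induction i with
      | zero => simp
      | succ i ih =>
        have hx1 : mw p ≤ mw p + α ^ i * (b q - mw p) := by
          nlinarith [pow_nonneg hα.le i]
        have := step_k (q + i * k) (by omega) _ hx1 ih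
        have hidx : q + i * k + k = q + (i + 1) * k := by ring
        rw [hidx] at this
        calc mw p + α ^ (i + 1) * (b q - mw p)
            = mw p + α * (mw p + α ^ i * (b q - mw p) - mw p) := by ring
          _ ≤ b (q + (i + 1) * k) := this
    intro i j
    induction j with
    | zero =>
      simpa using Pi0 i
    | succ j ih =>
      have hx1 : mw p ≤ mw p + α ^ i * β ^ j * (b q - mw p) := by
        nlinarith [pow_nonneg hα.le i, pow_nonneg hβ.le j,
          mul_nonneg (pow_nonneg hα.le i) (pow_nonneg hβ.le j)]
      have := step_m (q + i * k + j * m) (by omega) _ hx1 ih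
      have hidx : q + i * k + j * m + m = q + i * k + (j + 1) * m := by ring
      rw [hidx] at this
      calc mw p + α ^ i * β ^ (j + 1) * (b q - mw p)
          = mw p + β * (mw p + α ^ i * β ^ j * (b q - mw p) - mw p) := by ring
        _ ≤ b (q + i * k + (j + 1) * m) := this
  -- H5 : contraction of oscillation
  obtain ⟨P0, w, hw0, hw1, H5⟩ :
      ∃ P0 : ℕ, ∃ w : ℝ, 0 < w ∧ w ≤ 1 ∧
        ∀ p, sw (p + P0) - mw (p + P0) ≤ (1 - w) * (sw p - mw p) := by
    set F := k * m with hF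
    set E := F + m with hE
    refine ⟨F + 2 * m, α ^ E * β ^ E, by positivity, ?_, ?_⟩
    · exact mul_le_one₀ (pow_le_one₀ hα.le hα1.le) (pow_nonneg hβ.le E)
        (pow_le_one₀ hβ.le hβ1.le)
    · intro p
      set w := α ^ E * β ^ E with hwdef
      have hw0 : 0 < w := by positivity
      have hw1 : w ≤ 1 := mul_le_one₀ (pow_le_one₀ hα.le hα1.le) (pow_nonneg hβ.le E)
        (pow_le_one₀ hβ.le hβ1.le)
      obtain ⟨q, hqmem, hqe⟩ := Finset.exists_mem_eq_sup' (hne (p + m)) b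
      simp only [Finset.mem_Ico] at hqmem
      have hq : p + m ≤ q := hqmem.1
      have hqe' : sw (p + m) = b q := hqe
      have hbq : mw p ≤ b q := (H1 p q (by omega)).1
      -- claim about the new window
      have claim : mw p + w * (b q - mw p) ≤ mw (q + F) := by
        apply Finset.le_inf'
        intro x hx
        simp only [Finset.mem_Ico] at hx
        set s := x - q with hs
        have hsF : F ≤ s ∧ s < F + m := by omega
        obtain ⟨i, j, hij⟩ := frob_rep k m hk (by omega) hcop s (hF ▸ hsF.1)
        have hi : i ≤ E := by
          have h1 : i ≤ i * k := Nat.le_mul_of_pos_right i (by omega)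
          have h2 : i * k ≤ s := hij ▸ Nat.le_add_right _ _
          omega
        have hj : j ≤ E := by
          have h1 : j ≤ j * m := Nat.le_mul_of_pos_right j (by omega)
          have h2 : j * m ≤ s := hij ▸ Nat.le_add_left _ _
          omega
        have hwle : w ≤ α ^ i * β ^ j := by
          have h1 : α ^ E ≤ α ^ i := pow_le_pow_of_le_one hα.le hα1.le hi
          have h2 : β ^ E ≤ β ^ j := pow_le_pow_of_le_one hβ.le hβ1.le hj
          exact mul_le_mul h1 h2 (pow_nonneg hβ.le E) (pow_nonneg hα.le i)
        have hidx : q + i * k + j * m = x := by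
          rw [Nat.add_assoc, hij]; omega
        have := H4 p q hq i j
        rw [hidx] at this
        have h0 : mw p + w * (b q - mw p) ≤ mw p + α ^ i * β ^ j * (b q - mw p) := by
          nlinarith [mul_le_mul_of_nonneg_right hwle (by linarith : (0:ℝ) ≤ b q - mw p)]
        exact le_trans h0 this
      have h2 : sw (p + (F + 2 * m)) ≤ sw (p + m) := H2sw (p + m) _ (by omega)
      have h3 : mw (q + F) ≤ mw (p + (F + 2 * m)) := H2mw (q + F) _ (by omega)
      have h4 : sw (p + m) ≤ sw p := H2sw p (p + m) (by omega)
      have h5 : mw p ≤ sw (p + m) := by rw [hqe']; exact hbq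
      rw [← hqe'] at claim
      nlinarith [claim, h2, h3, h4, h5, hw0, hw1]
  -- H6 : oscillation tends to zero
  have H6 : Tendsto (fun p => sw p - mw p) atTop (nhds 0) := by
    have hδ0 : ∀ p, 0 ≤ sw p - mw p := fun p => by linarith [H3 p]
    have hδanti : ∀ p q, p ≤ q → sw q - mw q ≤ sw p - mw p := fun p q h => by
      linarith [H2mw p q h, H2sw p q h]
    have hgeo : ∀ t : ℕ, sw (t * P0) - mw (t * P0) ≤ (1 - w) ^ t * (sw 0 - mw 0) := by
      intro t
      induction t with
      | zero => simp
      | succ t ih =>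
        have h2 : (t + 1) * P0 = t * P0 + P0 := by ring
        rw [h2]
        calc sw (t * P0 + P0) - mw (t * P0 + P0)
            ≤ (1 - w) * (sw (t * P0) - mw (t * P0)) := H5 (t * P0)
          _ ≤ (1 - w) * ((1 - w) ^ t * (sw 0 - mw 0)) :=
              mul_le_mul_of_nonneg_left ih (by linarith)
          _ = (1 - w) ^ (t + 1) * (sw 0 - mw 0) := by ring
    rw [Metric.tendsto_atTop]
    intro ε hε
    have hpow : Tendsto (fun t : ℕ => (1 - w) ^ t * (sw 0 - mw 0)) atTop (nhds 0) := by
      have h1 : Tendsto (fun t : ℕ => (1 - w) ^ t) atTop (nhds 0) := by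
        apply tendsto_pow_atTop_nhds_zero_of_lt_one (by linarith) (by linarith)
      simpa using h1.mul_const (sw 0 - mw 0)
    have hev := hpow.eventually (gt_mem_nhds hε)
    rw [eventually_atTop] at hev
    obtain ⟨t, ht⟩ := hev
    refine ⟨t * P0, fun n hn => ?_⟩
    rw [Real.dist_eq, sub_zero, abs_of_nonneg (hδ0 n)]
    calc sw n - mw n ≤ sw (t * P0) - mw (t * P0) := hδanti _ _ hn
      _ ≤ (1 - w) ^ t * (sw 0 - mw 0) := hgeo t
      _ < ε := ht t le_rfl
  -- conclusion
  have hbdd : BddAbove (Set.range mw) := by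
    refine ⟨sw 0, ?_⟩
    rintro x ⟨p, rfl⟩
    exact le_trans (H3 p) (H2sw 0 p (Nat.zero_le p))
  have hmono : Monotone mw := fun p q h => H2mw p q h
  have hL : Tendsto mw atTop (nhds (⨆ p, mw p)) := tendsto_atTop_ciSup hmono hbdd
  set L := ⨆ p, mw p with hLdef
  refine ⟨L, ?_, ?_⟩
  · obtain ⟨q, hq, hqe⟩ := Finset.exists_mem_eq_inf' (hne 0) b
    refine ⟨q, by simpa using (Finset.mem_Ico.mp hq).2, ?_⟩
    rw [← hqe]
    exact le_ciSup hbdd 0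
  · have hsw_t : Tendsto sw atTop (nhds L) := by
      have := hL.add H6
      simpa using this.congr (fun p => by ring)
    exact tendsto_of_tendsto_of_tendsto_of_le_of_le hL hsw_t
      (fun n => (H1 n n le_rfl).1) (fun n => (H1 n n le_rfl).2)
theorem long_lifetime_fraction_limit (k m : ℕ) (hk : 1 ≤ k) (hkm : k < m)
    (hcop : Nat.gcd k m = 1) (a c : ℕ → ℝ)
    (ha0 : ∀ n < m, a n = 1)
    (harec : ∀ n ≥ m, a n = a (n - k) + a (n - m))
    (hc0 : ∀ n < m + k, c n = 1)
    (hcrec : ∀ n ≥ m + k, c n = c (n - k) + c (n - m))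
    (r₀ : ℝ) (hr0 : 0 < r₀) (hr1 : r₀ < 1) (hroot : r₀ ^ k + r₀ ^ m = 1) :
    Tendsto (fun n : ℕ => c n / a n) atTop (nhds (r₀ ^ k)) := by
  have hm0 : 0 < m := by omega
  have hr0' : r₀ ≠ 0 := ne_of_gt hr0
  -- a is positive
  have hapos : ∀ n, 0 < a n := by
    intro n
    induction n using Nat.strong_induction_on with
    | _ n ih =>
      by_cases h : n < m
      · rw [ha0 n h]; norm_num
      · push_neg at h
        rw [harec n h]
        have h1 := ih (n - k) (by omega)
        have h2 := ih (n - m) (by omega)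
        linarith
  -- c n = a (n - k)
  have hca : ∀ n, c n = a (n - k) := by
    intro n
    induction n using Nat.strong_induction_on with
    | _ n ih =>
      by_cases h : n < m + k
      · rw [hc0 n h, ha0 (n - k) (by omega)]
      · push_neg at h
        rw [hcrec n h, ih (n - k) (by omega), ih (n - m) (by omega),
          harec (n - k) (by omega)]
        have e1 : n - m - k = n - k - m := by omega
        rw [e1]
  set b : ℕ → ℝ := fun n => a n * r₀ ^ n with hb
  have hbrec : ∀ n ≥ m, b n = r₀ ^ k * b (n - k) + r₀ ^ m * b (n - m) := by
    intro n hn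
    simp only [hb]
    rw [harec n hn, pow_sub₀ r₀ hr0' (by omega : k ≤ n),
      pow_sub₀ r₀ hr0' (by omega : m ≤ n)]
    field_simp
  obtain ⟨L, ⟨n₀, hn₀m, hn₀L⟩, hbL⟩ := converges_aux k m hk hkm hcop
    (r₀ ^ k) (r₀ ^ m) (by positivity) (by positivity) hroot b hbrec
  have hL0 : 0 < L := by
    have : (0 : ℝ) < b n₀ := by
      simp only [hb]
      rw [ha0 n₀ hn₀m]
      positivity
    linarith
  have hbk : Tendsto (fun n => b (n - k)) atTop (nhds L) :=
    hbL.comp (tendsto_sub_atTop_nat k)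
  have hdiv : Tendsto (fun n => b (n - k) / b n * r₀ ^ k) atTop (nhds (r₀ ^ k)) := by
    have := (hbk.div hbL (ne_of_gt hL0)).mul_const (r₀ ^ k)
    simpa [div_self (ne_of_gt hL0)] using this
  refine hdiv.congr' ?_
  filter_upwards [eventually_ge_atTop k] with n hn
  rw [hca n]
  simp only [hb]
  rw [pow_sub₀ r₀ hr0' hn]
  have ha1 : a n ≠ 0 := ne_of_gt (hapos n)
  have ha2 : r₀ ^ n ≠ 0 := pow_ne_zero n hr0'
  have ha3 : r₀ ^ k ≠ 0 := pow_ne_zero k hr0'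
  field_simp
end
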